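/- arXiv:math/0508386 — 9 statements merged into one kernel-verified Lean document; each statement's English description precedes it below -/
import Mathlib

section
/- For any α in the symmetric inverse monoid IS_n, the number of idempotents of the semigroup (IS_n, *_α) equals 2^(rank α), where rank α is the cardinality of the image of α. -/
/-- `PInj n` : the symmetric inverse semigroup `IS_n`, modeled as partial
injective maps `Fin n → Option (Fin n)`. -/
abbrev PInj (n : ℕ) : Type :=
  {f : Fin n → Option (Fin n) // ∀ x y z : Fin n, f x = some z → f y = some z → x = y}

/-- Composition, applying `f` first, then `g` (left-to-right, as in the paper). -/
def PInj.comp {n : ℕ} (f g : PInj n) : PInj n :=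
  ⟨fun x => (f.1 x).bind g.1, by
    intro x y z hx hy
    rcases Option.bind_eq_some_iff.mp hx with ⟨w, hfw, hgw⟩
    rcases Option.bind_eq_some_iff.mp hy with ⟨v, hfv, hgv⟩
    cases g.2 w v z hgw hgv
    exact f.2 x y w hfw hfv⟩

/-- The deformed multiplication `x *_α y = x · α · y` on `PInj n`. -/
def PInj.dmul {n : ℕ} (α x y : PInj n) : PInj n := (x.comp α).comp y

/-- The range (image) of a partial injection. -/
def PInj.ran {n : ℕ} (f : PInj n) : Set (Fin n) := {y | ∃ x, f.1 x = some y}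

/-- The domain of a partial injection. -/
def PInj.dom {n : ℕ} (f : PInj n) : Set (Fin n) := {x | (f.1 x).isSome}

/-- The rank of a partial injection: the cardinality of its range. -/
noncomputable def PInj.rank {n : ℕ} (f : PInj n) : ℕ := f.ran.ncard

/-- The permutation `σ ∈ S_n` viewed as an element of `IS_n`. -/
def PInj.ofPerm {n : ℕ} (σ : Equiv.Perm (Fin n)) : PInj n :=
  ⟨fun x => some (σ x), by
    intro x y z hx hy
    exact σ.injective ((Option.some.inj hx).trans (Option.some.inj hy).symm)⟩

/-!
An element `ε` satisfies `ε α ε = ε` exactly when `α` sends `y` back to `x` whenever `ε`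
sends `x` to `y`, i.e. when `ε` is a restriction of the partial inverse `α⁻¹`. A restriction
of a partial injection is determined by its domain, which can be any subset of the domain of
the map; so the idempotents correspond to the subsets of `dom α⁻¹ = ran α`.
-/

namespace PInj

variable {n : ℕ}

def IsRestrictionOf (g f : PInj n) : Prop :=
  ∀ x y, g.1 x = some y → f.1 x = some y

open Classical in
noncomputable def restrict (f : PInj n) (S : Set (Fin n)) : PInj n :=
  ⟨fun x => if x ∈ S then f.1 x else none, by
    intro x y z hx hy
    dsimp only at hx hy
    split_ifs at hx hy
    exact f.2 x y z hx hy⟩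

lemma restrict_apply (f : PInj n) (S : Set (Fin n)) (x : Fin n) [Decidable (x ∈ S)] :
    (f.restrict S).1 x = if x ∈ S then f.1 x else none := by
  unfold restrict
  dsimp only
  congr

lemma restrict_isRestrictionOf (f : PInj n) (S : Set (Fin n)) :
    (f.restrict S).IsRestrictionOf f := by
  intro x y h
  classical
  rw [restrict_apply] at h
  split_ifs at h
  exact h

lemma dom_restrict (f : PInj n) (S : Set (Fin n)) : (f.restrict S).dom = S ∩ f.dom := by
  classical
  ext x
  simp only [dom, restrict_apply, Set.mem_ofPred_eq, Set.mem_inter_iff]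
  split_ifs <;> simp [*]

lemma restrict_dom_of_isRestrictionOf {g f : PInj n} (hgf : g.IsRestrictionOf f) :
    f.restrict g.dom = g := by
  classical
  apply Subtype.ext
  funext x
  rw [restrict_apply]
  split_ifs with hx
  · obtain ⟨y, hy⟩ := Option.isSome_iff_exists.mp hx
    rw [hy, hgf x y hy]
  · exact (Option.not_isSome_iff_eq_none.mp hx).symm

lemma ncard_setOf_isRestrictionOf (f : PInj n) :
    {g : PInj n | g.IsRestrictionOf f}.ncard = 2 ^ f.dom.ncard := by
  rw [← Set.ncard_powerset]
  refine Set.ncard_congr (fun g _ => g.dom) ?_ ?_ ?_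
  · intro g hg x hx
    obtain ⟨y, hy⟩ := Option.isSome_iff_exists.mp hx
    simp [dom, hg x y hy]
  · intro g g' hg hg' hdom
    rw [← restrict_dom_of_isRestrictionOf hg, ← restrict_dom_of_isRestrictionOf hg', hdom]
  · intro S hS
    exact ⟨f.restrict S, f.restrict_isRestrictionOf S, by
      rw [dom_restrict, Set.inter_eq_left.mpr hS]⟩

open Classical in
noncomputable def inv (f : PInj n) : PInj n :=
  ⟨fun x => if h : x ∈ f.ran then some h.choose else none, by
    intro x y z hx hy
    dsimp only at hx hy
    split_ifs at hx hy with hxr hyr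
    have hfx : f.1 z = some x := Option.some.inj hx ▸ hxr.choose_spec
    have hfy : f.1 z = some y := Option.some.inj hy ▸ hyr.choose_spec
    exact Option.some.inj (hfx.symm.trans hfy)⟩

lemma inv_apply_eq_some_iff {f : PInj n} {x y : Fin n} :
    f.inv.1 x = some y ↔ f.1 y = some x := by
  unfold inv
  dsimp only
  split_ifs with hx
  · rw [Option.some_inj]
    exact ⟨fun h => h ▸ hx.choose_spec, fun h => f.2 _ _ x hx.choose_spec h⟩
  · exact ⟨nofun, fun h => absurd ⟨y, h⟩ hx⟩

lemma dom_inv (f : PInj n) : f.inv.dom = f.ran := by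
  ext x
  simp [dom, ran, Option.isSome_iff_exists, inv_apply_eq_some_iff]

lemma dmul_self_eq_self_iff (α ε : PInj n) :
    dmul α ε ε = ε ↔ ε.IsRestrictionOf α.inv := by
  simp only [IsRestrictionOf, inv_apply_eq_some_iff]
  constructor
  · intro h x y hxy
    have hx : ((ε.1 x).bind α.1).bind ε.1 = ε.1 x := congrFun (congrArg Subtype.val h) x
    rw [hxy, Option.bind_some, Option.bind_eq_some_iff] at hx
    obtain ⟨z, hz, hεz⟩ := hx
    rwa [ε.2 z x y hεz hxy] at hz
  · intro h
    apply Subtype.ext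
    funext x
    show ((ε.1 x).bind α.1).bind ε.1 = ε.1 x
    cases hx : ε.1 x with
    | none => rfl
    | some y => simp [h x y hx, hx]

end PInj

/-- For any `α ∈ IS_n`, the number of idempotents of `(IS_n, *_α)`
equals `2 ^ rank α`. -/
theorem card_idempotents_deformed (n : ℕ) (α : PInj n) :
    {ε : PInj n | PInj.dmul α ε ε = ε}.ncard = 2 ^ α.rank := by
  simp only [PInj.dmul_self_eq_self_iff]
  rw [PInj.ncard_setOf_isRestrictionOf, PInj.dom_inv, PInj.rank]
end

section
/- For α, β ∈ IS_n, the semigroups (IS_n, *_α) and (IS_n, *_β) are isomorphic if and only if rank(α) = rank(β). -/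
/-! If `β = u α v` with units `u`, `v`, then `x ↦ v⁻¹ x u⁻¹` carries `*_α` to `*_β`; in `IS_n` two
elements of equal rank differ by permutations on both sides. Conversely, a semigroup isomorphism
maps the set of products `x *_α y` onto that of `*_β`, and the products of `*_α` are exactly the
elements of rank at most `rank α` (any element of rank `r ≤ rank α` is `p · α' · q` for a
restriction `α'` of `α` to `r` points and permutations `p`, `q`). Comparing the sizes of these
nested sets gives `rank α = rank β`. -/

theorem exists_equiv_mul_mul_of_units {M : Type*} [Monoid M] (α : M) (u v : Mˣ) :
    ∃ e : M ≃ M, ∀ x y, e (x * α * y) = e x * (u * α * v) * e y :=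
  ⟨(Units.mulLeft v⁻¹).trans (Units.mulRight u⁻¹), fun x y => by simp [mul_assoc]⟩

theorem Equiv.image_range_mul_mul {M N : Type*} [Mul M] [Mul N] {α : M} {β : N} (e : M ≃ N)
    (he : ∀ x y, e (x * α * y) = e x * β * e y) :
    e '' Set.range (fun p : M × M => p.1 * α * p.2) =
      Set.range (fun p : N × N => p.1 * β * p.2) := by
  rw [← Set.range_comp]
  have hcomp : e ∘ (fun p : M × M => p.1 * α * p.2) = (fun p : N × N => p.1 * β * p.2) ∘ Prod.map e e :=
    funext fun p => he p.1 p.2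
  rw [hcomp, (e.surjective.prodMap e.surjective).range_comp]

theorem eq_of_ncard_setOf_le_eq {M β : Type*} [Finite M] [LinearOrder β] (f : M → β) {a b : M}
    (h : {x | f x ≤ f a}.ncard = {x | f x ≤ f b}.ncard) : f a = f b := by
  wlog hab : f a ≤ f b generalizing a b
  · exact (this h.symm (le_of_not_ge hab)).symm
  have hsub : {x | f x ≤ f a} ⊆ {x | f x ≤ f b} := fun x hx => le_trans hx hab
  have heq := Set.eq_of_subset_of_ncard_le hsub h.ge
  have hb : b ∈ {x | f x ≤ f a} := heq ▸ le_refl (f b)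
  exact le_antisymm hab hb

namespace PInj

variable {n : ℕ}

theorem ext {f g : PInj n} (h : ∀ x, f.1 x = g.1 x) : f = g := Subtype.ext (funext h)

theorem comp_assoc (f g h : PInj n) : (f.comp g).comp h = f.comp (g.comp h) :=
  ext fun x => by cases hf : f.1 x <;> simp [comp, hf]

theorem comp_ofPerm_one (f : PInj n) : f.comp (ofPerm 1) = f :=
  ext fun x => by cases hf : f.1 x <;> simp [comp, ofPerm, hf]

instance : Monoid (PInj n) where
  mul := comp
  one := ofPerm 1
  mul_assoc := comp_assoc
  one_mul _ := rfl
  mul_one := comp_ofPerm_one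

theorem ofPerm_apply (σ : Equiv.Perm (Fin n)) (x : Fin n) : (ofPerm σ).1 x = some (σ x) := rfl

theorem mul_apply (f g : PInj n) (x : Fin n) : (f * g).1 x = (f.1 x).bind g.1 := rfl

theorem dmul_eq_mul (α x y : PInj n) : dmul α x y = x * α * y := rfl

theorem ofPerm_mul_ofPerm (σ τ : Equiv.Perm (Fin n)) :
    ofPerm σ * ofPerm τ = ofPerm (τ * σ) := rfl

def permUnit (σ : Equiv.Perm (Fin n)) : (PInj n)ˣ where
  val := ofPerm σ
  inv := ofPerm σ⁻¹
  val_inv := by rw [ofPerm_mul_ofPerm, inv_mul_cancel]; rfl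
  inv_val := by rw [ofPerm_mul_ofPerm, mul_inv_cancel]; rfl

theorem mem_dom {f : PInj n} {x : Fin n} : x ∈ f.dom ↔ ∃ y, f.1 x = some y :=
  Option.isSome_iff_exists

theorem apply_eq_none {f : PInj n} {x : Fin n} (hx : x ∉ f.dom) : f.1 x = none :=
  Option.not_isSome_iff_eq_none.mp hx

def domVal (f : PInj n) (x : f.dom) : Fin n := (f.1 x).get x.2

theorem apply_eq_some_domVal (f : PInj n) (x : f.dom) : f.1 x = some (f.domVal x) :=
  (Option.some_get x.2).symm

theorem domVal_injective (f : PInj n) : Function.Injective f.domVal := fun x y hxy =>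
  Subtype.ext <| f.2 x y _ (f.apply_eq_some_domVal x) (hxy ▸ f.apply_eq_some_domVal y)

theorem range_domVal (f : PInj n) : Set.range f.domVal = f.ran := by
  ext y
  constructor
  · rintro ⟨x, rfl⟩
    exact ⟨x, f.apply_eq_some_domVal x⟩
  · rintro ⟨x, hx⟩
    exact ⟨⟨x, mem_dom.mpr ⟨y, hx⟩⟩, Option.some_inj.mp ((f.apply_eq_some_domVal _).symm.trans hx)⟩

theorem rank_eq_ncard_dom (f : PInj n) : f.rank = f.dom.ncard := by
  rw [rank, ← range_domVal, Set.ncard_range_of_injective f.domVal_injective,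
    Nat.card_coe_set_eq]

theorem rank_mul_le_left (f g : PInj n) : (f * g).rank ≤ f.rank := by
  rw [rank_eq_ncard_dom, rank_eq_ncard_dom]
  refine Set.ncard_le_ncard (fun x hx => ?_) (Set.toFinite _)
  obtain ⟨z, hz⟩ := mem_dom.mp hx
  obtain ⟨y, hy, -⟩ := Option.bind_eq_some_iff.mp hz
  exact mem_dom.mpr ⟨y, hy⟩

theorem rank_mul_le_right (f g : PInj n) : (f * g).rank ≤ g.rank := by
  refine Set.ncard_le_ncard (fun z ⟨x, hx⟩ => ?_) (Set.toFinite _)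
  obtain ⟨y, -, hy⟩ := Option.bind_eq_some_iff.mp hx
  exact ⟨y, hy⟩

theorem exists_perm_mul_mul_eq {γ δ : PInj n} (h : γ.rank = δ.rank) :
    ∃ p q : Equiv.Perm (Fin n), γ = ofPerm p * δ * ofPerm q := by
  classical
  rw [rank_eq_ncard_dom, rank_eq_ncard_dom] at h
  obtain ⟨eD⟩ : Nonempty (γ.dom ≃ δ.dom) :=
    Finite.card_eq.mp (by rwa [Nat.card_coe_set_eq, Nat.card_coe_set_eq])
  obtain ⟨q, hq⟩ := Equiv.Perm.exists_extending_pair (δ.domVal ∘ eD) γ.domVal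
    (δ.domVal_injective.comp eD.injective) γ.domVal_injective
  refine ⟨eD.extendSubtype, q, ext fun x => ?_⟩
  by_cases hx : x ∈ γ.dom
  · rw [mul_apply, mul_apply, ofPerm_apply, Option.bind_some, eD.extendSubtype_apply_of_mem x hx,
      apply_eq_some_domVal, Option.bind_some, ofPerm_apply]
    exact (γ.apply_eq_some_domVal ⟨x, hx⟩).trans (congrArg some (hq ⟨x, hx⟩).symm)
  · rw [mul_apply, mul_apply, ofPerm_apply, Option.bind_some,
      apply_eq_none (eD.extendSubtype_not_mem x hx), apply_eq_none hx, Option.bind_none]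

open Classical in
noncomputable def ofSet (s : Set (Fin n)) : PInj n :=
  ⟨fun x => if x ∈ s then some x else none, fun x y z hx hy => by
    dsimp only at hx hy
    split_ifs at hx hy
    exact (Option.some_inj.mp hx).trans (Option.some_inj.mp hy).symm⟩

theorem dom_ofSet_mul (s : Set (Fin n)) (f : PInj n) : (ofSet s * f).dom = s ∩ f.dom := by
  ext x
  by_cases hx : x ∈ s <;> simp [ofSet, mul_apply, dom, hx]

theorem exists_mul_mul_eq_of_rank_le {α γ : PInj n} (h : γ.rank ≤ α.rank) :
    ∃ x y : PInj n, x * α * y = γ := by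
  rw [rank_eq_ncard_dom α] at h
  obtain ⟨s, hs, hcard⟩ := Set.exists_subset_card_eq h
  have hrank : γ.rank = (ofSet s * α).rank := by
    rw [rank_eq_ncard_dom (ofSet s * α), dom_ofSet_mul, Set.inter_eq_left.mpr hs, hcard]
  obtain ⟨p, q, hγ⟩ := exists_perm_mul_mul_eq hrank
  exact ⟨ofPerm p * ofSet s, ofPerm q, by rw [hγ, mul_assoc (ofPerm p)]⟩

theorem range_mul_mul (α : PInj n) :
    Set.range (fun p : PInj n × PInj n => p.1 * α * p.2) = {γ | γ.rank ≤ α.rank} := by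
  ext γ
  constructor
  · rintro ⟨⟨x, y⟩, rfl⟩
    exact (rank_mul_le_left _ _).trans (rank_mul_le_right _ _)
  · intro h
    obtain ⟨x, y, hγ⟩ := exists_mul_mul_eq_of_rank_le h
    exact ⟨(x, y), hγ⟩

end PInj

/-- `(IS_n, *_α)` and `(IS_n, *_β)` are isomorphic semigroups iff
`rank α = rank β`. -/
theorem deformed_iso_iff_rank_eq (n : ℕ) (α β : PInj n) :
    (∃ e : PInj n ≃ PInj n, ∀ x y : PInj n,
        e (PInj.dmul α x y) = PInj.dmul β (e x) (e y)) ↔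
      α.rank = β.rank := by
  simp only [PInj.dmul_eq_mul]
  constructor
  · rintro ⟨e, he⟩
    have hcard := congrArg Set.ncard (e.image_range_mul_mul he)
    rw [Set.ncard_image_of_injective _ e.injective, PInj.range_mul_mul,
      PInj.range_mul_mul] at hcard
    exact eq_of_ncard_setOf_le_eq PInj.rank hcard
  · intro h
    obtain ⟨p, q, hβ⟩ := PInj.exists_perm_mul_mul_eq h.symm
    rw [hβ]
    exact exists_equiv_mul_mul_of_units α (PInj.permUnit p) (PInj.permUnit q)
end

section
/- For a, b ∈ T_n, the semigroups (T_n, *_a) and (T_n, *_b) are isomorphic if and only if a and b have the same type, i.e., for every k the number of points of N with fiber of size k under a equals that under b. -/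
/-- Left-to-right composition in the full transformation monoid `T_n`:
`(x · a)(i) = a (x i)` (apply `x` first, then `a`). -/
def Tcomp {n : ℕ} (x a : Fin n → Fin n) : Fin n → Fin n := fun i => a (x i)

/-- The deformed multiplication `x *_a y = x · a · y` on `T_n`. -/
def Tdmul {n : ℕ} (a x y : Fin n → Fin n) : Fin n → Fin n := Tcomp (Tcomp x a) y

/-- `a` and `b` have the same type: for every `k`, the number of points whose
fiber under `a` has `k` elements equals the corresponding number for `b`. -/
def SameType {n : ℕ} (a b : Fin n → Fin n) : Prop :=
  ∀ k : ℕ,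
    (Finset.univ.filter fun y : Fin n =>
      (Finset.univ.filter fun s : Fin n => a s = y).card = k).card =
    (Finset.univ.filter fun y : Fin n =>
      (Finset.univ.filter fun s : Fin n => b s = y).card = k).card

/-!
In `(T_n, *_a)` the left multiples `u *_a x = x ∘ a ∘ u` of `x` are exactly the maps with values
in `x(im a)`, so there are `|x(im a)|^n` of them and an isomorphism preserves `|x(im a)|`. As
`|(x *_a v)(im a)| = |v(a(x(im a)))|` is largest for `v = id`, it also preserves `|a(x(im a))|`.
The number of `x` with `x(im a) = S` depends only on `|S|` and is positive for
`1 ≤ |S| ≤ |im a|`, so counting the `x` with `|x(im a)| = |a(x(im a))| = m` shows that the number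
of `m`-sets on which `a` is injective is an invariant. That number is the `m`-th elementary
symmetric function of the fiber sizes of `a`, and these functions determine the fiber sizes.
Conversely, maps of the same type satisfy `b = π⁻¹ ∘ a ∘ ρ` for permutations `π, ρ`, and then
`x ↦ ρ⁻¹ ∘ x ∘ π` is an isomorphism.
-/

open Finset

section Fibers

variable {α β : Type*} [Fintype α] [DecidableEq β]

def fiberCard (a : α → β) (y : β) : ℕ := #{s | a s = y}

lemma exists_perm_fiberCard_eq [Fintype β] {a b : α → β}
    (h : ∀ k, #{y | fiberCard a y = k} = #{y | fiberCard b y = k}) :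
    ∃ π : Equiv.Perm β, ∀ y, fiberCard a (π y) = fiberCard b y := by
  have e : ∀ k, {y // fiberCard b y = k} ≃ {y // fiberCard a y = k} := fun k =>
    Fintype.equivOfCardEq <| by rw [Fintype.card_subtype, Fintype.card_subtype, h]
  exact ⟨Equiv.ofFiberEquiv e, Equiv.ofFiberEquiv_map e⟩

lemma exists_perm_comp_eq_comp [DecidableEq α] {a b : α → β} {π : Equiv.Perm β}
    (h : ∀ y, fiberCard a (π y) = fiberCard b y) :
    ∃ ρ : Equiv.Perm α, ∀ i, a (ρ i) = π (b i) := by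
  have e : ∀ y, {s // b s = y} ≃ {s // π.symm (a s) = y} := fun y =>
    Fintype.equivOfCardEq <| by
      simp_rw [Fintype.card_subtype, Equiv.symm_apply_eq]
      exact (h y).symm
  exact ⟨Equiv.ofFiberEquiv e, fun i => π.symm_apply_eq.mp (Equiv.ofFiberEquiv_map e i)⟩

end Fibers

section Isomorphisms

variable {n : ℕ}

lemma arrowCongr_tdmul {a b : Fin n → Fin n} {π ρ : Equiv.Perm (Fin n)}
    (h : ∀ i, a (ρ i) = π (b i)) (x y : Fin n → Fin n) :
    Equiv.arrowCongr π.symm ρ.symm (Tdmul a x y) =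
      Tdmul b (Equiv.arrowCongr π.symm ρ.symm x) (Equiv.arrowCongr π.symm ρ.symm y) := by
  funext i
  simp [Tdmul, Tcomp, ← h]

theorem exists_tdmul_iso_of_sameType {a b : Fin n → Fin n} (h : SameType a b) :
    ∃ e : (Fin n → Fin n) ≃ (Fin n → Fin n), ∀ x y,
      e (Tdmul a x y) = Tdmul b (e x) (e y) := by
  obtain ⟨π, hπ⟩ := exists_perm_fiberCard_eq h
  obtain ⟨ρ, hρ⟩ := exists_perm_comp_eq_comp hπ
  exact ⟨_, arrowCongr_tdmul hρ⟩

end Isomorphisms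

section OperationEquiv

variable {M N : Type*} {mulM : M → M → M} {mulN : N → N → N} {e : M ≃ N}

lemma Equiv.symm_apply_op_eq (he : ∀ x y, e (mulM x y) = mulN (e x) (e y)) (x y : N) :
    e.symm (mulN x y) = mulM (e.symm x) (e.symm y) :=
  e.symm_apply_eq.mpr <| by rw [he, e.apply_symm_apply, e.apply_symm_apply]

lemma Equiv.card_image_op_left_eq [Fintype M] [Fintype N] [DecidableEq M] [DecidableEq N]
    (he : ∀ x y, e (mulM x y) = mulN (e x) (e y)) (x : M) :
    #(univ.image (mulM · x)) = #(univ.image (mulN · (e x))) := by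
  rw [← card_image_of_injective _ e.injective, image_image, ← image_univ_equiv e, image_image]
  simp only [Function.comp_def, he]

end OperationEquiv

section Invariants

variable {n : ℕ}

lemma image_tdmul_left (a x : Fin n → Fin n) :
    univ.image (fun u => Tdmul a u x) = Fintype.piFinset fun _ => (univ.image a).image x := by
  ext h
  simp only [mem_image, mem_univ, true_and, Fintype.mem_piFinset, exists_exists_eq_and]
  constructor
  · rintro ⟨u, rfl⟩ i
    exact ⟨u i, rfl⟩
  · intro hh
    choose u hu using hh
    exact ⟨u, funext hu⟩

lemma card_image_tdmul_left (a x : Fin n → Fin n) :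
    #(univ.image fun u => Tdmul a u x) = #((univ.image a).image x) ^ n := by
  simp [image_tdmul_left]

lemma card_image_tdmul_right_le (a x v : Fin n → Fin n) :
    #((univ.image a).image (Tdmul a x v)) ≤ #(((univ.image a).image x).image a) := by
  have : (univ.image a).image (Tdmul a x v) = (((univ.image a).image x).image a).image v := by
    simp only [image_image]; rfl
  exact this ▸ card_image_le

lemma image_tdmul_id (a x : Fin n → Fin n) :
    (univ.image a).image (Tdmul a x id) = ((univ.image a).image x).image a := by
  simp only [image_image]; rfl

variable {a b : Fin n → Fin n} {e : (Fin n → Fin n) ≃ (Fin n → Fin n)}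

lemma card_image_image_eq_of_tdmul (he : ∀ x y, e (Tdmul a x y) = Tdmul b (e x) (e y))
    (hn : n ≠ 0) (x : Fin n → Fin n) :
    #((univ.image a).image x) = #((univ.image b).image (e x)) :=
  Nat.pow_left_injective hn <| by
    simpa only [card_image_tdmul_left] using e.card_image_op_left_eq he x

lemma card_image_image_image_le_of_tdmul (he : ∀ x y, e (Tdmul a x y) = Tdmul b (e x) (e y))
    (hn : n ≠ 0) (x : Fin n → Fin n) :
    #(((univ.image a).image x).image a) ≤ #(((univ.image b).image (e x)).image b) :=
  calc #(((univ.image a).image x).image a)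
      = #((univ.image b).image (e (Tdmul a x id))) := by
        rw [← image_tdmul_id, card_image_image_eq_of_tdmul he hn]
    _ ≤ _ := by rw [he]; exact card_image_tdmul_right_le b (e x) (e id)

lemma card_image_image_image_eq_of_tdmul (he : ∀ x y, e (Tdmul a x y) = Tdmul b (e x) (e y))
    (hn : n ≠ 0) (x : Fin n → Fin n) :
    #(((univ.image a).image x).image a) = #(((univ.image b).image (e x)).image b) :=
  le_antisymm (card_image_image_image_le_of_tdmul he hn x) <| by
    simpa using card_image_image_image_le_of_tdmul (e.symm_apply_op_eq he) hn (e x)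

lemma card_image_eq_of_tdmul (he : ∀ x y, e (Tdmul a x y) = Tdmul b (e x) (e y))
    (hn : n ≠ 0) : #(univ.image a) = #(univ.image b) := by
  have hab := card_image_image_eq_of_tdmul he hn id
  have hba := card_image_image_eq_of_tdmul (e.symm_apply_op_eq he) hn id
  rw [image_id] at hab hba
  exact le_antisymm (hab ▸ card_image_le) (hba ▸ card_image_le)

end Invariants

section Counting

variable {α β : Type*} [DecidableEq α] [DecidableEq β]

lemma exists_image_eq {A : Finset α} {S : Finset β} (hS : S.Nonempty) (h : #S ≤ #A) :
    ∃ x : α → β, A.image x = S := by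
  obtain ⟨A', hA'A, hA'⟩ := exists_subset_card_eq h
  obtain ⟨s₀, hs₀⟩ := hS
  let f := A'.equivOfCardEq hA'
  refine ⟨fun i => if hi : i ∈ A' then f ⟨i, hi⟩ else s₀, ?_⟩
  refine Subset.antisymm (fun s hs => ?_) (fun s hs => ?_)
  · obtain ⟨i, -, rfl⟩ := mem_image.mp hs
    split_ifs
    exacts [(f _).2, hs₀]
  · refine mem_image.mpr ⟨(f.symm ⟨s, hs⟩ : α), hA'A (f.symm ⟨s, hs⟩).2, ?_⟩
    simp

variable [Fintype α] [Fintype β]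

lemma card_filter_image_eq_sum (A : Finset α) (P : Finset β → Prop) [DecidablePred P] :
    #{x : α → β | P (A.image x)} = ∑ S ∈ {S | P S}, #{x : α → β | A.image x = S} := by
  rw [card_eq_sum_card_fiberwise (f := fun x : α → β => A.image x) (t := {S | P S})
    (fun x hx => by simpa using hx)]
  refine sum_congr rfl fun S hS => ?_
  rw [filter_filter]
  exact congrArg card <| filter_congr fun x _ =>
    ⟨And.right, fun hx => ⟨hx ▸ (mem_filter.mp hS).2, hx⟩⟩

lemma card_image_eq_congr {A A' : Finset α} {S S' : Finset β} (hA : #A = #A') (hS : #S = #S') :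
    #{x : α → β | A.image x = S} = #{x : α → β | A'.image x = S'} := by
  obtain ⟨π, hπ⟩ := Equiv.Perm.exists_map_finset_eq A' A hA.symm
  obtain ⟨ρ, hρ⟩ := Equiv.Perm.exists_map_finset_eq S S' hS
  rw [map_eq_image] at hπ hρ
  refine card_equiv (Equiv.arrowCongr π.symm ρ) fun x => ?_
  have key : A'.image (Equiv.arrowCongr π.symm ρ x) = (A.image x).image ρ := by
    rw [← hπ]; simp only [image_image]; congr 1
  simp only [mem_filter, mem_univ, true_and, key, ← hρ]
  exact (image_injective ρ.injective).eq_iff.symm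

lemma card_filter_image_eq_pos {A : Finset α} {S : Finset β} (hS : S.Nonempty) (h : #S ≤ #A) :
    0 < #{x : α → β | A.image x = S} :=
  let ⟨x, hx⟩ := exists_image_eq hS h
  card_pos.mpr ⟨x, by simpa using hx⟩

lemma card_filter_image_eq_mul {A : Finset α} {m : ℕ} {P : Finset β → Prop} [DecidablePred P]
    (hP : ∀ S, P S → #S = m) {S₀ : Finset β} (hS₀ : #S₀ = m) :
    #{x : α → β | P (A.image x)} = #{S | P S} * #{x : α → β | A.image x = S₀} := by
  rw [card_filter_image_eq_sum, sum_const_nat fun S hS =>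
    card_image_eq_congr rfl ((hP S (mem_filter.mp hS).2).trans hS₀.symm)]

end Counting

section Transversals

variable {α β : Type*} [Fintype α] [DecidableEq α] [DecidableEq β]

lemma card_filter_image_eq_and_card_eq (a : α → β) (T : Finset β) :
    #{S : Finset α | S.image a = T ∧ #S = #T} = ∏ y ∈ T, fiberCard a y := by
  -- such sets `S` are exactly the images of the sections of `a` over `T`
  let Φ : ((y : T) → {s // a s = y}) → Finset α := fun σ => T.attach.image fun y => (σ y : α)
  have mem_Φ : ∀ σ y, (σ y : α) ∈ Φ σ := fun σ y => mem_image_of_mem _ (mem_attach _ _)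
  have image_Φ : ∀ σ, (Φ σ).image a = T := fun σ => by
    rw [image_image]
    exact (image_congr fun y _ => (σ y).2).trans attach_image_val
  have card_Φ : ∀ σ, #(Φ σ) = #T := fun σ => by
    refine (card_image_of_injective _ fun y y' hyy' => ?_).trans card_attach
    exact Subtype.ext <| (σ y).2.symm.trans <| (congrArg a hyy').trans (σ y').2
  have Φ_injective : Function.Injective Φ := fun σ τ hστ => funext fun y => by
    obtain ⟨y', -, hy'⟩ := mem_image.mp (hστ ▸ mem_Φ σ y)
    obtain rfl : y' = y := Subtype.ext <| (τ y').2.symm.trans <| (congrArg a hy').trans (σ y).2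
    exact (Subtype.ext hy').symm
  have range_Φ : univ.image Φ = ({S | S.image a = T ∧ #S = #T} : Finset (Finset α)) := by
    ext S
    simp only [mem_image, mem_univ, true_and, mem_filter]
    constructor
    · rintro ⟨σ, rfl⟩
      exact ⟨image_Φ σ, card_Φ σ⟩
    · rintro ⟨rfl, hS⟩
      have : ∀ y : S.image a, ∃ s ∈ S, a s = y := fun y => mem_image.mp y.2
      choose σ hσS hσ using this
      refine ⟨fun y => ⟨σ y, hσ y⟩, eq_of_subset_of_card_le (fun s hs => ?_) ?_⟩
      · obtain ⟨y, -, rfl⟩ := mem_image.mp hs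
        exact hσS y
      · rw [hS, card_Φ]
  rw [← range_Φ, card_image_of_injective _ Φ_injective, card_univ, Fintype.card_pi,
    ← prod_coe_sort T]
  simp only [Fintype.card_subtype, fiberCard]

lemma esymm_map_fiberCard {R : Type*} [CommSemiring R] [Fintype β] (a : α → β) (m : ℕ) :
    (univ.val.map fun y => (fiberCard a y : R)).esymm m =
      #{S : Finset α | #S = m ∧ #(S.image a) = m} := by
  rw [esymm_map_val, card_eq_sum_card_fiberwise (f := fun S : Finset α => S.image a)
    (t := univ.powersetCard m) (fun S hS => by simpa using (mem_filter.mp hS).2.2)]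
  push_cast
  refine sum_congr rfl fun T hT => ?_
  rw [← Nat.cast_prod, ← card_filter_image_eq_and_card_eq, filter_filter]
  have hTm := (mem_powersetCard.mp hT).2
  congr 2
  refine filter_congr fun S _ => ⟨?_, ?_⟩
  · rintro ⟨rfl, hS⟩
    exact ⟨⟨hS.trans hTm, hTm⟩, rfl⟩
  · rintro ⟨⟨hS, -⟩, rfl⟩
    exact ⟨rfl, hS.trans hTm.symm⟩

end Transversals

theorem Multiset.eq_of_card_eq_of_esymm_eq {R : Type*} [CommRing R] [IsDomain R] {s t : Multiset R}
    (hcard : card s = card t) (h : ∀ k, s.esymm k = t.esymm k) : s = t := by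
  have : (s.map fun r => Polynomial.X - Polynomial.C r).prod =
      (t.map fun r => Polynomial.X - Polynomial.C r).prod := by
    simp only [prod_X_sub_X_eq_sum_esymm, hcard, h]
  simpa only [Polynomial.roots_multiset_prod_X_sub_C] using congrArg Polynomial.roots this

lemma sameType_of_map_fiberCard_eq {n : ℕ} {a b : Fin n → Fin n}
    (h : univ.val.map (fun y => (fiberCard a y : ℤ)) = univ.val.map fun y => (fiberCard b y : ℤ)) :
    SameType a b := fun k => by
  have := congrArg (Multiset.count (k : ℤ)) h
  simp only [Multiset.count_map, Nat.cast_inj, eq_comm (a := k)] at this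
  exact this

section IsoInvariance

variable {n : ℕ} {a b : Fin n → Fin n} {e : (Fin n → Fin n) ≃ (Fin n → Fin n)}

lemma card_filter_card_image_eq_zero {m : ℕ} (h : #(univ.image a) < m) :
    #{S : Finset (Fin n) | #S = m ∧ #(S.image a) = m} = 0 :=
  card_eq_zero.mpr <| filter_false_of_mem fun S _ hS => by
    have := card_le_card (image_subset_image (subset_univ S) (f := a))
    omega

lemma card_filter_card_image_eq_of_tdmul (he : ∀ x y, e (Tdmul a x y) = Tdmul b (e x) (e y))
    (hn : n ≠ 0) (m : ℕ) :
    #{S : Finset (Fin n) | #S = m ∧ #(S.image a) = m} =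
      #{S : Finset (Fin n) | #S = m ∧ #(S.image b) = m} := by
  have hab := card_image_eq_of_tdmul he hn
  rcases Nat.eq_zero_or_pos m with rfl | hm
  · simp
  by_cases hmr : #(univ.image a) < m
  · rw [card_filter_card_image_eq_zero hmr, card_filter_card_image_eq_zero (hab ▸ hmr)]
  obtain ⟨S₀, -, hS₀⟩ :=
    exists_subset_card_eq (s := univ) ((not_lt.mp hmr).trans (card_le_univ (univ.image a)))
  have transport :
      #{x : Fin n → Fin n | #((univ.image a).image x) = m ∧
        #(((univ.image a).image x).image a) = m} =
      #{x : Fin n → Fin n | #((univ.image b).image x) = m ∧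
        #(((univ.image b).image x).image b) = m} :=
    card_equiv e fun x => by
      simp only [mem_filter, mem_univ, true_and, card_image_image_eq_of_tdmul he hn x,
        card_image_image_image_eq_of_tdmul he hn x]
  rw [card_filter_image_eq_mul (P := fun S => #S = m ∧ #(S.image a) = m) (fun S hS => hS.1) hS₀,
    card_filter_image_eq_mul (P := fun S => #S = m ∧ #(S.image b) = m) (fun S hS => hS.1) hS₀,
    card_image_eq_congr hab.symm rfl] at transport
  refine Nat.eq_of_mul_eq_mul_right (card_filter_image_eq_pos ?_ ?_) transport
  · exact card_pos.mp (hS₀ ▸ hm)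
  · omega

theorem sameType_of_tdmul_iso (he : ∀ x y, e (Tdmul a x y) = Tdmul b (e x) (e y)) :
    SameType a b := by
  rcases eq_or_ne n 0 with rfl | hn
  · intro k; simp
  refine sameType_of_map_fiberCard_eq (Multiset.eq_of_card_eq_of_esymm_eq (by simp) fun m => ?_)
  rw [esymm_map_fiberCard, esymm_map_fiberCard, card_filter_card_image_eq_of_tdmul he hn]

end IsoInvariance

/-- `(T_n, *_a)` and `(T_n, *_b)` are isomorphic semigroups iff `a` and `b`
have the same type. -/
theorem deformed_T_iso_iff_sameType (n : ℕ) (a b : Fin n → Fin n) :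
    (∃ e : (Fin n → Fin n) ≃ (Fin n → Fin n), ∀ x y : Fin n → Fin n,
        e (Tdmul a x y) = Tdmul b (e x) (e y)) ↔ SameType a b :=
  ⟨fun ⟨_, he⟩ => sameType_of_tdmul_iso he, exists_tdmul_iso_of_sameType⟩
end

section
/- If a, b ∈ T_n have the same type, then there exist permutations π, τ ∈ S_n with b = τ·a·π, and f(x) = π⁻¹·x·τ⁻¹ defines a semigroup isomorphism (T_n, *_a) → (T_n, *_b). -/
/-- Gluing lemma: if two functions on a fintype have fibers of equal
cardinality everywhere, there is a permutation matching them. -/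
lemma exists_perm_of_fiber_card_eq {α β : Type*} [Fintype α] [DecidableEq α] [DecidableEq β]
    (f₁ f₂ : α → β)
    (h : ∀ y : β, Fintype.card {s // f₁ s = y} = Fintype.card {s // f₂ s = y}) :
    ∃ g : Equiv.Perm α, ∀ s, f₂ (g s) = f₁ s := by
  have e : ∀ y : β, {s // f₁ s = y} ≃ {s // f₂ s = y} :=
    fun y => Fintype.equivOfCardEq (h y)
  exact ⟨Equiv.ofFiberEquiv e, fun s => Equiv.ofFiberEquiv_map e s⟩


/-- If `a` and `b` have the same type, then `b = τ·a·π` for some permutations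
`π, τ ∈ S_n`, and `f(x) = π⁻¹·x·τ⁻¹` is a semigroup isomorphism
`(T_n, *_a) → (T_n, *_b)`. -/
theorem sameType_gives_iso (n : ℕ) (a b : Fin n → Fin n) (h : SameType a b) :
    ∃ π τ : Equiv.Perm (Fin n),
      b = (fun i => π (a (τ i))) ∧
      Function.Bijective
        (fun x : Fin n → Fin n => fun i => τ.symm (x (π.symm i))) ∧
      ∀ x y : Fin n → Fin n,
        (fun i => τ.symm (Tdmul a x y (π.symm i))) =
          Tdmul b (fun i => τ.symm (x (π.symm i))) (fun i => τ.symm (y (π.symm i))) := by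
  classical
  -- fiber-size functions
  set f₁ : Fin n → ℕ := fun y => (Finset.univ.filter fun s : Fin n => a s = y).card with hf₁
  set f₂ : Fin n → ℕ := fun y => (Finset.univ.filter fun s : Fin n => b s = y).card with hf₂
  -- step 1: permutation matching fiber sizes
  obtain ⟨g, hg⟩ : ∃ g : Equiv.Perm (Fin n), ∀ y, f₂ (g y) = f₁ y := by
    apply exists_perm_of_fiber_card_eq
    intro k
    have := h k
    simpa [Fintype.card_subtype, f₁, f₂] using this
  -- step 2: permutation matching fibers themselves
  obtain ⟨τ, hτ⟩ : ∃ τ : Equiv.Perm (Fin n), ∀ s, g (a (τ s)) = b s := by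
    apply exists_perm_of_fiber_card_eq b (fun s => g (a s))
    intro y
    have key : f₂ y = f₁ (g.symm y) := by
      have := hg (g.symm y); simpa using this
    have h1 : Fintype.card {s // b s = y} = f₂ y := by
      simp [Fintype.card_subtype, f₂]
    have h2 : Fintype.card {s // g (a s) = y} = f₁ (g.symm y) := by
      have : ∀ s : Fin n, g (a s) = y ↔ a s = g.symm y := by
        intro s; constructor
        · intro hs; simp [← hs]
        · intro hs; simp [hs]
      simp only [this]
      simp [Fintype.card_subtype, f₁]
    rw [h1, h2, key]
  refine ⟨g, τ, ?_, ?_, ?_⟩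
  · funext i; exact (hτ i).symm
  · constructor
    · intro x y hxy
      funext i
      have := congrFun hxy (g i)
      simp at this
      exact this
    · intro x
      refine ⟨fun i => τ (x (g i)), ?_⟩
      funext i; simp
  · intro x y
    funext i
    simp only [Tdmul, Tcomp]
    have : b (τ.symm (x (g.symm i))) = g (a (x (g.symm i))) := by
      rw [← hτ (τ.symm (x (g.symm i)))]; simp
    rw [this]
    simp
end

section
/- For α = b^m a^k in the bicyclic semigroup B, the set of idempotents of (B, *_α) is exactly {b^{k+i} a^{m+i} : i ≥ 0}. -/
/-- The bicyclic semigroup `B = ⟨a, b | ab = 1⟩`, modeled as `ℕ × ℕ`, where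
`(m, k)` stands for the canonical form `b^m a^k`.  Multiplication:
`(b^m a^k)(b^t a^s) = b^{m + t - min k t} a^{s + k - min k t}`. -/
def bmul (x y : ℕ × ℕ) : ℕ × ℕ := (x.1 + (y.1 - x.2), y.2 + (x.2 - y.1))

/-- The deformed multiplication `x *_α y = x · α · y` on the bicyclic semigroup. -/
def bdmul (α x y : ℕ × ℕ) : ℕ × ℕ := bmul (bmul x α) y

/-- For `α = b^m a^k`, the idempotents of `(B, *_α)` are exactly the elements
`b^{k+i} a^{m+i}`, `i ≥ 0`. -/
theorem idempotents_deformed_bicyclic (m k : ℕ) :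
    {ε : ℕ × ℕ | bdmul (m, k) ε ε = ε} = {ε : ℕ × ℕ | ∃ i : ℕ, ε = (k + i, m + i)} := by
  ext ⟨p, q⟩
  simp only [Set.mem_setOf_eq, bdmul, bmul, Prod.mk.injEq, Prod.ext_iff]
  constructor
  · rintro ⟨h1, h2⟩
    exact ⟨p - k, by omega⟩
  · rintro ⟨i, h1, h2⟩
    omega
end

section
/- For α = b^m a^k in the bicyclic semigroup, the idempotents ε_i = b^{k+i} a^{m+i} of (B, *_α) form a decreasing chain in the natural partial order: ε_i ≤ ε_j (meaning ε_i *_α ε_j = ε_j *_α ε_i = ε_i) if and only if i ≥ j. In particular the idempotents are linearly ordered with maximum ε₀ = b^k a^m. -/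
/-- For `α = b^m a^k` and `ε_i = b^{k+i} a^{m+i}`: `ε_i ≤ ε_j` in the natural
partial order on idempotents of `(B, *_α)` (i.e. `ε_i *_α ε_j = ε_j *_α ε_i = ε_i`)
iff `i ≥ j`; in particular the idempotents form a chain with maximum
`ε₀ = b^k a^m`. -/
theorem idempotent_chain_deformed_bicyclic (m k : ℕ) :
    (∀ i j : ℕ,
      (bdmul (m, k) (k + i, m + i) (k + j, m + j) = (k + i, m + i) ∧
       bdmul (m, k) (k + j, m + j) (k + i, m + i) = (k + i, m + i)) ↔ j ≤ i) ∧
    (∀ i : ℕ,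
      bdmul (m, k) (k + i, m + i) (k, m) = (k + i, m + i) ∧
      bdmul (m, k) (k, m) (k + i, m + i) = (k + i, m + i)) := by
  constructor
  · intro i j
    simp only [bdmul, bmul, Prod.mk.injEq]
    omega
  · intro i
    simp only [bdmul, bmul, Prod.mk.injEq]
    omega
end

section
/- Let α = b^m a^k ∈ B and ε_i = b^{k+i} a^{m+i}. For ξ = b^t a^s ∈ B: ε_i *_α ξ = ξ if and only if k + i ≤ t, and ξ *_α ε_i = ξ if and only if m + i ≤ s. Consequently |{ξ ∈ B : ε_i *_α ξ ≠ ξ and ξ *_α ε_i ≠ ξ}| = (k+i)(m+i). -/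
/-- For `α = b^m a^k`, `ε_i = b^{k+i} a^{m+i}` and `ξ = b^t a^s`:
`ε_i *_α ξ = ξ` iff `k + i ≤ t`, and `ξ *_α ε_i = ξ` iff `m + i ≤ s`;
consequently `|{ξ : ε_i *_α ξ ≠ ξ and ξ *_α ε_i ≠ ξ}| = (k+i)(m+i)`. -/
theorem fixed_by_idempotent_bicyclic (m k i : ℕ) :
    (∀ t s : ℕ,
      (bdmul (m, k) (k + i, m + i) (t, s) = (t, s) ↔ k + i ≤ t) ∧
      (bdmul (m, k) (t, s) (k + i, m + i) = (t, s) ↔ m + i ≤ s)) ∧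
    {ξ : ℕ × ℕ | bdmul (m, k) (k + i, m + i) ξ ≠ ξ ∧
        bdmul (m, k) ξ (k + i, m + i) ≠ ξ}.ncard = (k + i) * (m + i) := by
  have key : ∀ t s : ℕ,
      (bdmul (m, k) (k + i, m + i) (t, s) = (t, s) ↔ k + i ≤ t) ∧
      (bdmul (m, k) (t, s) (k + i, m + i) = (t, s) ↔ m + i ≤ s) := by
    intro t s
    constructor <;> (simp only [bdmul, bmul, Prod.mk.injEq]; omega)
  refine ⟨key, ?_⟩
  have hset : {ξ : ℕ × ℕ | bdmul (m, k) (k + i, m + i) ξ ≠ ξ ∧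
      bdmul (m, k) ξ (k + i, m + i) ≠ ξ} =
      ↑(Finset.range (k + i) ×ˢ Finset.range (m + i)) := by
    ext ⟨t, s⟩
    simp [Set.mem_setOf_eq, (key t s).1, (key t s).2]
  rw [hset, Set.ncard_coe_finset]
  simp
end

section
/- For distinct elements α, β of the bicyclic semigroup B, the semigroups (B, *_α) and (B, *_β) are not isomorphic. -/
lemma bd_eval (p q m k i j : ℕ) :
    bdmul (p,q) (m,k) (i,j) =
      (m + (p - k) + (i - (q + (k - p))), j + ((q + (k - p)) - i)) := by
  simp [bdmul, bmul]

lemma u_idem (p q : ℕ) : bdmul (p,q) (q,p) (q,p) = (q,p) := by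
  rw [bd_eval]; simp only [Prod.mk.injEq]; omega

lemma idem_char (p q m k : ℕ) (h : bdmul (p,q) (m,k) (m,k) = (m,k)) :
    p ≤ k ∧ m + p = q + k := by
  rw [bd_eval] at h; simp only [Prod.mk.injEq] at h; omega

lemma idem_mul_u (p q : ℕ) (f : ℕ × ℕ) (h : bdmul (p,q) f f = f) :
    bdmul (p,q) f (q,p) = f := by
  obtain ⟨m,k⟩ := f
  obtain ⟨h1, h2⟩ := idem_char p q m k h
  rw [bd_eval]; simp only [Prod.mk.injEq]; omega

lemma u_mul_idem (p q : ℕ) (f : ℕ × ℕ) (h : bdmul (p,q) f f = f) :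
    bdmul (p,q) (q,p) f = f := by
  obtain ⟨m,k⟩ := f
  obtain ⟨h1, h2⟩ := idem_char p q m k h
  rw [bd_eval]; simp only [Prod.mk.injEq]; omega

/-- right invertible elements of the local monoid -/
def RI (p q : ℕ) (y : ℕ × ℕ) : Prop :=
  bdmul (p,q) (q,p) y = y ∧ bdmul (p,q) y (q,p) = y ∧ ∃ x, bdmul (p,q) y x = (q,p)

def LI (p q : ℕ) (y : ℕ × ℕ) : Prop :=
  bdmul (p,q) (q,p) y = y ∧ bdmul (p,q) y (q,p) = y ∧ ∃ x, bdmul (p,q) x y = (q,p)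

lemma RI_iff (p q m k : ℕ) : RI p q (m,k) ↔ m = q ∧ p ≤ k := by
  constructor
  · rintro ⟨h1, h2, ⟨i,j⟩, h3⟩
    rw [bd_eval] at h1 h2 h3
    simp only [Prod.mk.injEq] at h1 h2 h3; omega
  · rintro ⟨hm, hk⟩
    refine ⟨?_, ?_, ⟨(q + k - p, p), ?_⟩⟩ <;>
      (rw [bd_eval]; simp only [Prod.mk.injEq]; omega)

lemma LI_iff (p q m k : ℕ) : LI p q (m,k) ↔ k = p ∧ q ≤ m := by
  constructor
  · rintro ⟨h1, h2, ⟨i,j⟩, h3⟩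
    rw [bd_eval] at h1 h2 h3
    simp only [Prod.mk.injEq] at h1 h2 h3; omega
  · rintro ⟨hk, hm⟩
    refine ⟨?_, ?_, ⟨(q, p + m - q), ?_⟩⟩ <;>
      (rw [bd_eval]; simp only [Prod.mk.injEq]; omega)

lemma RI_prod (p q k k' : ℕ) (h : p ≤ k) (h' : p ≤ k') :
    bdmul (p,q) (q,k) (q,k') = (q, k + k' - p) := by
  rw [bd_eval]; simp only [Prod.mk.injEq]; omega

lemma LI_prod (p q m m' : ℕ) (h : q ≤ m) (h' : q ≤ m') :
    bdmul (p,q) (m,p) (m',p) = (m + m' - q, p) := by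
  rw [bd_eval]; simp only [Prod.mk.injEq]; omega

def Vp (p q : ℕ) (y : ℕ × ℕ) : Prop :=
  RI p q y ∧ y ≠ (q,p) ∧
    ∀ z z', RI p q z → RI p q z' → bdmul (p,q) z z' = y → z = (q,p) ∨ z' = (q,p)

def Wp (p q : ℕ) (y : ℕ × ℕ) : Prop :=
  LI p q y ∧ y ≠ (q,p) ∧
    ∀ z z', LI p q z → LI p q z' → bdmul (p,q) z z' = y → z = (q,p) ∨ z' = (q,p)

lemma Vp_iff (p q : ℕ) (y : ℕ × ℕ) : Vp p q y ↔ y = (q, p+1) := by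
  obtain ⟨m,k⟩ := y
  constructor
  · rintro ⟨hri, hne, hmin⟩
    obtain ⟨hm, hk⟩ := (RI_iff p q m k).1 hri
    have hne' : ¬ (m = q ∧ k = p) := fun ⟨a, b⟩ => hne (by simp [a, b])
    rcases Nat.lt_or_ge k (p+2) with hk2 | hk2
    · simp only [Prod.mk.injEq]; omega
    · exfalso
      have h1 : RI p q (q, p+1) := (RI_iff p q q (p+1)).2 ⟨rfl, by omega⟩
      have h2 : RI p q (q, k-1) := (RI_iff p q q (k-1)).2 ⟨rfl, by omega⟩
      have h3 : bdmul (p,q) (q, p+1) (q, k-1) = (m, k) := by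
        rw [RI_prod p q (p+1) (k-1) (by omega) (by omega)]
        simp only [Prod.mk.injEq]; omega
      rcases hmin _ _ h1 h2 h3 with hc | hc <;>
        (simp only [Prod.mk.injEq] at hc; omega)
  · rintro hy
    simp only [Prod.mk.injEq] at hy
    constructor
    · exact (RI_iff p q m k).2 (by omega)
    constructor
    · simp only [ne_eq, Prod.mk.injEq]; omega
    · rintro ⟨m1,k1⟩ ⟨m2,k2⟩ hz hz' hzz
      obtain ⟨hm1, hk1⟩ := (RI_iff p q m1 k1).1 hz
      obtain ⟨hm2, hk2⟩ := (RI_iff p q m2 k2).1 hz'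
      rw [show (m1,k1) = (q,k1) by simp [hm1], show (m2,k2) = (q,k2) by simp [hm2],
        RI_prod p q k1 k2 hk1 hk2] at hzz
      simp only [Prod.mk.injEq] at hzz ⊢
      omega

lemma Wp_iff (p q : ℕ) (y : ℕ × ℕ) : Wp p q y ↔ y = (q+1, p) := by
  obtain ⟨m,k⟩ := y
  constructor
  · rintro ⟨hli, hne, hmin⟩
    obtain ⟨hk, hm⟩ := (LI_iff p q m k).1 hli
    have hne' : ¬ (m = q ∧ k = p) := fun ⟨a, b⟩ => hne (by simp [a, b])
    rcases Nat.lt_or_ge m (q+2) with hm2 | hm2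
    · simp only [Prod.mk.injEq]; omega
    · exfalso
      have h1 : LI p q (q+1, p) := (LI_iff p q (q+1) p).2 ⟨rfl, by omega⟩
      have h2 : LI p q (m-1, p) := (LI_iff p q (m-1) p).2 ⟨rfl, by omega⟩
      have h3 : bdmul (p,q) (q+1, p) (m-1, p) = (m, k) := by
        rw [LI_prod p q (q+1) (m-1) (by omega) (by omega)]
        simp only [Prod.mk.injEq]; omega
      rcases hmin _ _ h1 h2 h3 with hc | hc <;>
        (simp only [Prod.mk.injEq] at hc; omega)
  · rintro hy
    simp only [Prod.mk.injEq] at hy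
    constructor
    · exact (LI_iff p q m k).2 (by omega)
    constructor
    · simp only [ne_eq, Prod.mk.injEq]; omega
    · rintro ⟨m1,k1⟩ ⟨m2,k2⟩ hz hz' hzz
      obtain ⟨hk1, hm1⟩ := (LI_iff p q m1 k1).1 hz
      obtain ⟨hk2, hm2⟩ := (LI_iff p q m2 k2).1 hz'
      rw [show (m1,k1) = (m1,p) by simp [hk1], show (m2,k2) = (m2,p) by simp [hk2],
        LI_prod p q m1 m2 hm1 hm2] at hzz
      simp only [Prod.mk.injEq] at hzz ⊢
      omega
lemma P_iff (p q m k : ℕ) : (∃ x, bdmul (p,q) x (m,k) = (m,k)) ↔ q ≤ m := by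
  constructor
  · rintro ⟨⟨i,j⟩, hx⟩
    rw [bd_eval] at hx; simp only [Prod.mk.injEq] at hx; omega
  · intro hm
    exact ⟨(q,p), by rw [bd_eval]; simp only [Prod.mk.injEq]; omega⟩

lemma Q_iff (p q m k : ℕ) : (∃ x, bdmul (p,q) (m,k) x = (m,k)) ↔ p ≤ k := by
  constructor
  · rintro ⟨⟨i,j⟩, hx⟩
    rw [bd_eval] at hx; simp only [Prod.mk.injEq] at hx; omega
  · intro hk
    exact ⟨(q,p), by rw [bd_eval]; simp only [Prod.mk.injEq]; omega⟩

lemma Z_iff (p q m k : ℕ) : (∀ x, bdmul (p,q) (q+1,p) x ≠ (m,k)) ↔ m ≤ q := by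
  constructor
  · intro hz
    by_contra hm
    exact hz (m-1, k) (by rw [bd_eval]; simp only [Prod.mk.injEq]; omega)
  · rintro hm ⟨i,j⟩ hx
    rw [bd_eval] at hx; simp only [Prod.mk.injEq] at hx; omega

lemma Z'_iff (p q m k : ℕ) : (∀ x, bdmul (p,q) x (q,p+1) ≠ (m,k)) ↔ k ≤ p := by
  constructor
  · intro hz
    by_contra hk
    exact hz (m, k-1) (by rw [bd_eval]; simp only [Prod.mk.injEq]; omega)
  · rintro hk ⟨i,j⟩ hx
    rw [bd_eval] at hx; simp only [Prod.mk.injEq] at hx; omega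

lemma pow_v (p q j : ℕ) : bdmul (p,q) (q,p+1) (q,p+j) = (q, p+j+1) := by
  rw [bd_eval]; simp only [Prod.mk.injEq]; omega

lemma pow_w (p q j : ℕ) : bdmul (p,q) (q+1,p) (q+j,p) = (q+j+1, p) := by
  rw [bd_eval]; simp only [Prod.mk.injEq]; omega

lemma G_iff (p q j : ℕ) (hj : 1 ≤ j) :
    (∃ y, (∀ x, bdmul (p,q) x (q,p+1) ≠ y) ∧ (¬ ∃ x, bdmul (p,q) x y = y) ∧
        bdmul (p,q) (q,p) y = (q, p+j)) ↔ (1 ≤ q ∧ j ≤ q) := by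
  constructor
  · rintro ⟨⟨m,k⟩, hZ, hP, hy⟩
    have hk : k ≤ p := (Z'_iff p q m k).1 hZ
    have hm : ¬ q ≤ m := fun hq => hP ((P_iff p q m k).2 hq)
    rw [bd_eval] at hy; simp only [Prod.mk.injEq] at hy; omega
  · rintro ⟨hq, hjq⟩
    refine ⟨(q - j, p), (Z'_iff p q (q-j) p).2 le_rfl, ?_, ?_⟩
    · intro hx
      have := (P_iff p q (q-j) p).1 hx
      omega
    · rw [bd_eval]; simp only [Prod.mk.injEq]; omega

lemma H_iff (p q j : ℕ) (hj : 1 ≤ j) :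
    (∃ y, (∀ x, bdmul (p,q) (q+1,p) x ≠ y) ∧ (¬ ∃ x, bdmul (p,q) y x = y) ∧
        bdmul (p,q) y (q,p) = (q+j, p)) ↔ (1 ≤ p ∧ j ≤ p) := by
  constructor
  · rintro ⟨⟨m,k⟩, hZ, hQ, hy⟩
    have hm : m ≤ q := (Z_iff p q m k).1 hZ
    have hk : ¬ p ≤ k := fun hp => hQ ((Q_iff p q m k).2 hp)
    rw [bd_eval] at hy; simp only [Prod.mk.injEq] at hy; omega
  · rintro ⟨hp, hjp⟩
    refine ⟨(q, p - j), (Z_iff p q q (p-j)).2 le_rfl, ?_, ?_⟩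
    · intro hx
      have := (Q_iff p q q (p-j)).1 hx
      omega
    · rw [bd_eval]; simp only [Prod.mk.injEq]; omega
lemma RI_mp (p q s t : ℕ) (e : ℕ × ℕ ≃ ℕ × ℕ)
    (he : ∀ x y, e (bdmul (p,q) x y) = bdmul (s,t) (e x) (e y))
    (hU : e (q,p) = (t,s)) (y : ℕ × ℕ) (hy : RI p q y) : RI s t (e y) := by
  obtain ⟨h1, h2, x, h3⟩ := hy
  refine ⟨?_, ?_, ⟨e x, ?_⟩⟩
  · rw [← hU, ← he, h1]
  · rw [← hU, ← he, h2]
  · rw [← he, h3, hU]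

lemma LI_mp (p q s t : ℕ) (e : ℕ × ℕ ≃ ℕ × ℕ)
    (he : ∀ x y, e (bdmul (p,q) x y) = bdmul (s,t) (e x) (e y))
    (hU : e (q,p) = (t,s)) (y : ℕ × ℕ) (hy : LI p q y) : LI s t (e y) := by
  obtain ⟨h1, h2, x, h3⟩ := hy
  refine ⟨?_, ?_, ⟨e x, ?_⟩⟩
  · rw [← hU, ← he, h1]
  · rw [← hU, ← he, h2]
  · rw [← he, h3, hU]

lemma Vp_mp (p q s t : ℕ) (e : ℕ × ℕ ≃ ℕ × ℕ)
    (he : ∀ x y, e (bdmul (p,q) x y) = bdmul (s,t) (e x) (e y))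
    (he' : ∀ x y, e.symm (bdmul (s,t) x y) = bdmul (p,q) (e.symm x) (e.symm y))
    (hU : e (q,p) = (t,s)) (hU' : e.symm (t,s) = (q,p))
    (y : ℕ × ℕ) (hy : Vp p q y) : Vp s t (e y) := by
  obtain ⟨hri, hne, hmin⟩ := hy
  refine ⟨RI_mp p q s t e he hU y hri, ?_, ?_⟩
  · intro hc
    exact hne (e.injective (hc.trans hU.symm))
  · intro z z' hz hz' hzz
    have hz0 : RI p q (e.symm z) := RI_mp s t p q e.symm he' hU' z hz
    have hz0' : RI p q (e.symm z') := RI_mp s t p q e.symm he' hU' z' hz'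
    have hprod : bdmul (p,q) (e.symm z) (e.symm z') = y := by
      apply e.injective
      rw [he, e.apply_symm_apply, e.apply_symm_apply, hzz]
    rcases hmin _ _ hz0 hz0' hprod with hc | hc
    · left; rw [← e.apply_symm_apply z, hc, hU]
    · right; rw [← e.apply_symm_apply z', hc, hU]

lemma Wp_mp (p q s t : ℕ) (e : ℕ × ℕ ≃ ℕ × ℕ)
    (he : ∀ x y, e (bdmul (p,q) x y) = bdmul (s,t) (e x) (e y))
    (he' : ∀ x y, e.symm (bdmul (s,t) x y) = bdmul (p,q) (e.symm x) (e.symm y))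
    (hU : e (q,p) = (t,s)) (hU' : e.symm (t,s) = (q,p))
    (y : ℕ × ℕ) (hy : Wp p q y) : Wp s t (e y) := by
  obtain ⟨hli, hne, hmin⟩ := hy
  refine ⟨LI_mp p q s t e he hU y hli, ?_, ?_⟩
  · intro hc
    exact hne (e.injective (hc.trans hU.symm))
  · intro z z' hz hz' hzz
    have hz0 : LI p q (e.symm z) := LI_mp s t p q e.symm he' hU' z hz
    have hz0' : LI p q (e.symm z') := LI_mp s t p q e.symm he' hU' z' hz'
    have hprod : bdmul (p,q) (e.symm z) (e.symm z') = y := by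
      apply e.injective
      rw [he, e.apply_symm_apply, e.apply_symm_apply, hzz]
    rcases hmin _ _ hz0 hz0' hprod with hc | hc
    · left; rw [← e.apply_symm_apply z, hc, hU]
    · right; rw [← e.apply_symm_apply z', hc, hU]

lemma G_mp (p q s t j : ℕ) (e : ℕ × ℕ ≃ ℕ × ℕ)
    (he : ∀ x y, e (bdmul (p,q) x y) = bdmul (s,t) (e x) (e y))
    (hU : e (q,p) = (t,s)) (hV : e (q,p+1) = (t,s+1)) (hpow : e (q,p+j) = (t,s+j))
    (hG : ∃ y, (∀ x, bdmul (p,q) x (q,p+1) ≠ y) ∧ (¬ ∃ x, bdmul (p,q) x y = y) ∧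
        bdmul (p,q) (q,p) y = (q, p+j)) :
    ∃ y, (∀ x, bdmul (s,t) x (t,s+1) ≠ y) ∧ (¬ ∃ x, bdmul (s,t) x y = y) ∧
        bdmul (s,t) (t,s) y = (t, s+j) := by
  obtain ⟨y, hZ, hP, hy⟩ := hG
  refine ⟨e y, ?_, ?_, ?_⟩
  · intro x hx
    exact hZ (e.symm x) (e.injective (by rw [he, e.apply_symm_apply, hV, hx]))
  · rintro ⟨x, hx⟩
    exact hP ⟨e.symm x, e.injective (by rw [he, e.apply_symm_apply, hx])⟩
  · rw [← hU, ← he, hy, hpow]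

lemma H_mp (p q s t j : ℕ) (e : ℕ × ℕ ≃ ℕ × ℕ)
    (he : ∀ x y, e (bdmul (p,q) x y) = bdmul (s,t) (e x) (e y))
    (hU : e (q,p) = (t,s)) (hW : e (q+1,p) = (t+1,s)) (hpow : e (q+j,p) = (t+j,s))
    (hH : ∃ y, (∀ x, bdmul (p,q) (q+1,p) x ≠ y) ∧ (¬ ∃ x, bdmul (p,q) y x = y) ∧
        bdmul (p,q) y (q,p) = (q+j, p)) :
    ∃ y, (∀ x, bdmul (s,t) (t+1,s) x ≠ y) ∧ (¬ ∃ x, bdmul (s,t) y x = y) ∧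
        bdmul (s,t) y (t,s) = (t+j, s) := by
  obtain ⟨y, hZ, hQ, hy⟩ := hH
  refine ⟨e y, ?_, ?_, ?_⟩
  · intro x hx
    exact hZ (e.symm x) (e.injective (by rw [he, hW, e.apply_symm_apply, hx]))
  · rintro ⟨x, hx⟩
    exact hQ ⟨e.symm x, e.injective (by rw [he, e.apply_symm_apply, hx])⟩
  · rw [← hU, ← he, hy, hpow]

/-- For distinct `α, β` in the bicyclic semigroup, `(B, *_α)` and `(B, *_β)`
are not isomorphic. -/
theorem deformed_bicyclic_not_iso (α β : ℕ × ℕ) (h : α ≠ β) :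
    ¬ ∃ e : ℕ × ℕ ≃ ℕ × ℕ, ∀ x y : ℕ × ℕ,
        e (bdmul α x y) = bdmul β (e x) (e y) := by
  rintro ⟨e, he⟩
  obtain ⟨p, q⟩ := α
  obtain ⟨s, t⟩ := β
  have he' : ∀ x y : ℕ × ℕ, e.symm (bdmul (s,t) x y) = bdmul (p,q) (e.symm x) (e.symm y) := by
    intro x y
    apply e.injective
    rw [he, e.apply_symm_apply, e.apply_symm_apply, e.apply_symm_apply]
  -- the top idempotent maps to the top idempotent
  have hU : e (q,p) = (t,s) := by
    have h1 : bdmul (s,t) (e (q,p)) (e (q,p)) = e (q,p) := by rw [← he, u_idem]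
    have hef : e (e.symm (t,s)) = (t,s) := e.apply_symm_apply _
    have hf0idem : bdmul (p,q) (e.symm (t,s)) (e.symm (t,s)) = e.symm (t,s) := by
      apply e.injective
      rw [he, hef, u_idem]
    have h2 : bdmul (s,t) (e (q,p)) (t,s) = (t,s) := by
      rw [← hef, ← he, u_mul_idem p q _ hf0idem]
    have h3 : bdmul (s,t) (e (q,p)) (t,s) = e (q,p) := idem_mul_u s t _ h1
    rw [h3] at h2; exact h2
  have hU' : e.symm (t,s) = (q,p) := by
    rw [← hU, e.symm_apply_apply]
  -- the generators map to the generators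
  have hV : e (q, p+1) = (t, s+1) := by
    have := Vp_mp p q s t e he he' hU hU' (q, p+1) ((Vp_iff p q _).2 rfl)
    exact (Vp_iff s t _).1 this
  have hW : e (q+1, p) = (t+1, s) := by
    have := Wp_mp p q s t e he he' hU hU' (q+1, p) ((Wp_iff p q _).2 rfl)
    exact (Wp_iff s t _).1 this
  have hV' : e.symm (t, s+1) = (q, p+1) := by rw [← hV, e.symm_apply_apply]
  have hW' : e.symm (t+1, s) = (q+1, p) := by rw [← hW, e.symm_apply_apply]
  -- powers
  have hVpow : ∀ j, e (q, p + j) = (t, s + j) := by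
    intro j
    induction j with
    | zero => simpa using hU
    | succ n ih =>
        have h1 : (q, p + (n+1)) = bdmul (p,q) (q,p+1) (q,p+n) := (pow_v p q n).symm
        rw [h1, he, hV, ih, pow_v s t n]
        rfl
  have hWpow : ∀ j, e (q + j, p) = (t + j, s) := by
    intro j
    induction j with
    | zero => simpa using hU
    | succ n ih =>
        have h1 : (q + (n+1), p) = bdmul (p,q) (q+1,p) (q+n,p) := (pow_w p q n).symm
        rw [h1, he, hW, ih, pow_w s t n]
        rfl
  have hVpow' : ∀ j, e.symm (t, s + j) = (q, p + j) := by
    intro j; rw [← hVpow j, e.symm_apply_apply]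
  have hWpow' : ∀ j, e.symm (t + j, s) = (q + j, p) := by
    intro j; rw [← hWpow j, e.symm_apply_apply]
  -- the two numeric invariants
  have hGt : ∀ j, 1 ≤ j → ((1 ≤ q ∧ j ≤ q) ↔ (1 ≤ t ∧ j ≤ t)) := by
    intro j hj
    rw [← G_iff p q j hj, ← G_iff s t j hj]
    exact ⟨G_mp p q s t j e he hU hV (hVpow j),
      G_mp s t p q j e.symm he' hU' hV' (hVpow' j)⟩
  have hHt : ∀ j, 1 ≤ j → ((1 ≤ p ∧ j ≤ p) ↔ (1 ≤ s ∧ j ≤ s)) := by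
    intro j hj
    rw [← H_iff p q j hj, ← H_iff s t j hj]
    exact ⟨H_mp p q s t j e he hU hW (hWpow j),
      H_mp s t p q j e.symm he' hU' hW' (hWpow' j)⟩
  have hqt : q = t := by
    rcases Nat.eq_zero_or_pos q with h0 | h0
    · rcases Nat.eq_zero_or_pos t with h1 | h1
      · omega
      · have := (hGt 1 le_rfl).2 ⟨h1, h1⟩; omega
    · rcases Nat.eq_zero_or_pos t with h1 | h1
      · have := (hGt 1 le_rfl).1 ⟨h0, h0⟩; omega
      · have ha := (hGt q h0).1 ⟨h0, le_rfl⟩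
        have hb := (hGt t h1).2 ⟨h1, le_rfl⟩
        omega
  have hps : p = s := by
    rcases Nat.eq_zero_or_pos p with h0 | h0
    · rcases Nat.eq_zero_or_pos s with h1 | h1
      · omega
      · have := (hHt 1 le_rfl).2 ⟨h1, h1⟩; omega
    · rcases Nat.eq_zero_or_pos s with h1 | h1
      · have := (hHt 1 le_rfl).1 ⟨h0, h0⟩; omega
      · have ha := (hHt p h0).1 ⟨h0, le_rfl⟩
        have hb := (hHt s h1).2 ⟨h1, le_rfl⟩
        omega
  exact h (by simp [hps, hqt])
end

section
/- The semigroups (B, *_α) and (B, *_β) are anti-isomorphic if and only if α and β are inverse elements of the bicyclic semigroup B, i.e., β = b^k a^m when α = b^m a^k. -/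
private lemma bd_eq (γ x y : ℕ × ℕ) : bdmul γ x y =
    (x.1 + (γ.1 - x.2) + (y.1 - (γ.2 + (x.2 - γ.1))),
      y.2 + ((γ.2 + (x.2 - γ.1)) - y.1)) := rfl

/-- The transposition is an anti-isomorphism from `*_γ` to `*_{γ^{-1}}`. -/
private lemma swap_bd (γ x y : ℕ × ℕ) :
    ((bdmul γ x y).2, (bdmul γ x y).1)
      = bdmul (γ.2, γ.1) (y.2, y.1) (x.2, x.1) := by
  simp only [bd_eq, Prod.mk.injEq]
  omega

/-- Principal right ideals: `x ∈ y *_γ B` iff `x.1 ≥ r_γ(y)`. -/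
private lemma rIdeal (γ y x : ℕ × ℕ) :
    (∃ z, bdmul γ y z = x) ↔ y.1 + (γ.1 - y.2) ≤ x.1 := by
  constructor
  · rintro ⟨z, rfl⟩
    simp only [bd_eq]
    omega
  · intro h
    refine ⟨(γ.2 + (y.2 - γ.1) + (x.1 - (y.1 + (γ.1 - y.2))), x.2), ?_⟩
    simp only [bd_eq, Prod.ext_iff]
    omega

/-- Principal left ideals: `x ∈ B *_γ y` iff `x.2 ≥ ℓ_γ(y)`. -/
private lemma lIdeal (γ y x : ℕ × ℕ) :
    (∃ z, bdmul γ z y = x) ↔ y.2 + (γ.2 - y.1) ≤ x.2 := by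
  constructor
  · rintro ⟨z, rfl⟩
    simp only [bd_eq]
    omega
  · intro h
    refine ⟨(x.1, γ.1 + ((y.1 + (x.2 - y.2)) - γ.2)), ?_⟩
    simp only [bd_eq, Prod.ext_iff]
    omega

/-- The top idempotent is idempotent. -/
private lemma top_idem (γ : ℕ × ℕ) :
    bdmul γ (γ.2, γ.1) (γ.2, γ.1) = (γ.2, γ.1) := by
  simp only [bd_eq, Prod.ext_iff]
  omega

/-- Any idempotent absorbs the top idempotent on the right. -/
private lemma idem_absorb (γ x : ℕ × ℕ) (h : bdmul γ x x = x) :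
    bdmul γ x (γ.2, γ.1) = x := by
  simp only [bd_eq, Prod.ext_iff] at h ⊢
  omega

/-- Main auxiliary lemma: an anti-isomorphism from `*_α` to `*_β` forces
`β.1 = α.2`. -/
private lemma antiiso_fst (α β : ℕ × ℕ) (φ : ℕ × ℕ ≃ ℕ × ℕ)
    (hφ : ∀ x y : ℕ × ℕ, φ (bdmul α x y) = bdmul β (φ y) (φ x)) :
    β.1 = α.2 := by
  -- Step A : φ maps the top idempotent to the top idempotent.
  have hφu : bdmul β (φ (α.2, α.1)) (φ (α.2, α.1)) = φ (α.2, α.1) := by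
    have h := hφ (α.2, α.1) (α.2, α.1)
    rw [top_idem] at h
    exact h.symm
  have hz : φ (φ.symm (β.2, β.1)) = (β.2, β.1) := φ.apply_symm_apply _
  have hzz : bdmul α (φ.symm (β.2, β.1)) (φ.symm (β.2, β.1)) = φ.symm (β.2, β.1) := by
    apply φ.injective
    rw [hφ, hz, top_idem]
  have hkey : φ (φ.symm (β.2, β.1)) = bdmul β (φ (α.2, α.1)) (β.2, β.1) := by
    conv_lhs => rw [← idem_absorb α _ hzz]
    rw [hφ, hz]
  have hA : φ (α.2, α.1) = (β.2, β.1) := by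
    have hkey' := hkey
    rw [hz] at hkey'
    rw [← idem_absorb β _ hφu]
    exact hkey'.symm
  -- Step B : transfer of principal ideals.
  have key : ∀ y x : ℕ × ℕ,
      y.1 + (α.1 - y.2) ≤ x.1 ↔ (φ y).2 + (β.2 - (φ y).1) ≤ (φ x).2 := by
    intro y x
    rw [← rIdeal α, ← lIdeal β]
    constructor
    · rintro ⟨z, rfl⟩
      exact ⟨φ z, (hφ y z).symm⟩
    · rintro ⟨z, hzeq⟩
      refine ⟨φ.symm z, φ.injective ?_⟩
      rw [hφ, φ.apply_symm_apply]
      exact hzeq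
  set G : ℕ → ℕ := fun n => (φ (n, α.1)).2 + (β.2 - (φ (n, α.1)).1) with hG
  have key' : ∀ (n : ℕ) (x : ℕ × ℕ), n ≤ x.1 ↔ G n ≤ (φ x).2 := by
    intro n x
    have h := key (n, α.1) x
    simpa using h
  have surj2 : ∀ c : ℕ, ∃ x : ℕ × ℕ, (φ x).2 = c := by
    intro c
    exact ⟨φ.symm (0, c), by simp⟩
  -- ℓ_β (φ y) = G (r_α y)
  have step1 : ∀ y : ℕ × ℕ, (φ y).2 + (β.2 - (φ y).1) = G (y.1 + (α.1 - y.2)) := by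
    intro y
    have E : ∀ c : ℕ, ((φ y).2 + (β.2 - (φ y).1) ≤ c ↔ G (y.1 + (α.1 - y.2)) ≤ c) := by
      intro c
      obtain ⟨x, hx⟩ := surj2 c
      rw [← hx, ← key y x, key' (y.1 + (α.1 - y.2)) x]
    have h1 := (E (G (y.1 + (α.1 - y.2)))).mpr le_rfl
    have h2 := (E ((φ y).2 + (β.2 - (φ y).1))).mp le_rfl
    omega
  have mono : ∀ n n' : ℕ, n ≤ n' → G n ≤ G n' := by
    intro n n' h
    obtain ⟨x, hx⟩ := surj2 (G n')
    have h1 : n' ≤ x.1 := (key' n' x).mpr (by rw [hx])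
    have h2 : n ≤ x.1 := le_trans h h1
    have h3 := (key' n x).mp h2
    rw [hx] at h3
    exact h3
  have inj : ∀ n n' : ℕ, G n = G n' → n = n' := by
    intro n n' h
    have h1 : n' ≤ n := by
      have := (key' n (n, 0)).mp le_rfl
      rw [h] at this
      exact (key' n' (n, 0)).mpr this
    have h2 : n ≤ n' := by
      have := (key' n' (n', 0)).mp le_rfl
      rw [← h] at this
      exact (key' n (n', 0)).mpr this
    omega
  have surjG : ∀ c : ℕ, ∃ n, G n = c := by
    intro c
    refine ⟨(φ.symm (β.2, c)).1 + (α.1 - (φ.symm (β.2, c)).2), ?_⟩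
    have h := step1 (φ.symm (β.2, c))
    rw [φ.apply_symm_apply] at h
    simp at h
    omega
  have le_G : ∀ n : ℕ, n ≤ G n := by
    intro n
    induction n with
    | zero => exact Nat.zero_le _
    | succ n ih =>
      have h1 : G n ≤ G (n + 1) := mono n (n + 1) (Nat.le_succ n)
      have h2 : G n ≠ G (n + 1) := fun h => by have := inj _ _ h; omega
      omega
  have Gid : ∀ n : ℕ, G n = n := by
    intro n
    induction n using Nat.strong_induction_on with
    | _ n ih =>
      obtain ⟨j, hj⟩ := surjG n
      rcases lt_trichotomy j n with h | h | h
      · rw [ih j h] at hj; omega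
      · subst h; exact hj
      · have h1 : G n ≤ G j := mono n j (le_of_lt h)
        have h2 := le_G n
        omega
  -- Conclusion
  have hfin := step1 (α.2, α.1)
  rw [hA] at hfin
  simp only [Nat.sub_self, Nat.add_zero] at hfin
  rw [Gid] at hfin
  omega

/-- `(B, *_α)` and `(B, *_β)` are anti-isomorphic iff `α` and `β` are inverse
elements of the bicyclic semigroup, i.e. `β = b^k a^m` when `α = b^m a^k`. -/
theorem deformed_bicyclic_antiiso_iff (α β : ℕ × ℕ) :
    (∃ φ : ℕ × ℕ ≃ ℕ × ℕ, ∀ x y : ℕ × ℕ,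
        φ (bdmul α x y) = bdmul β (φ y) (φ x)) ↔ β = (α.2, α.1) := by
  constructor
  · rintro ⟨φ, hφ⟩
    have h1 : β.1 = α.2 := antiiso_fst α β φ hφ
    -- conjugate by the transposition to get the other component
    set s : ℕ × ℕ ≃ ℕ × ℕ := Equiv.prodComm ℕ ℕ with hs
    have hsapp : ∀ w : ℕ × ℕ, s w = (w.2, w.1) := fun w => rfl
    set φ' : ℕ × ℕ ≃ ℕ × ℕ := s.trans (φ.trans s) with hφ'def
    have hφ'app : ∀ w : ℕ × ℕ, φ' w = ((φ (w.2, w.1)).2, (φ (w.2, w.1)).1) := by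
      intro w
      simp [hφ'def, hsapp, Equiv.trans_apply]
    have hφ' : ∀ x y : ℕ × ℕ, φ' (bdmul (α.2, α.1) x y)
        = bdmul (β.2, β.1) (φ' y) (φ' x) := by
      intro x y
      have h2 : ((bdmul (α.2, α.1) x y).2, (bdmul (α.2, α.1) x y).1)
          = bdmul α (y.2, y.1) (x.2, x.1) := by
        have := swap_bd (α.2, α.1) x y
        simpa using this
      rw [hφ'app, h2, hφ]
      have h3 := swap_bd β (φ (x.2, x.1)) (φ (y.2, y.1))
      rw [h3]
      rw [hφ'app, hφ'app]
    have h2 : (β.2, β.1).1 = ((α.2, α.1) : ℕ × ℕ).2 := antiiso_fst (α.2, α.1) (β.2, β.1) φ' hφ'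
    simp only at h2
    exact Prod.ext h1 h2
  · rintro rfl
    refine ⟨Equiv.prodComm ℕ ℕ, fun x y => ?_⟩
    have h := swap_bd α x y
    simpa [Equiv.prodComm_apply, Prod.swap] using h
end
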